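/- For every odd natural number m with m ≥ 3, we have h(T(m)) < h(m), where T(m) = (3m+1)/2. (Equivalently, the branch g2 of the conjugate map satisfies g2(x) < x at every dyadic point x = h(m) with m odd, m ≥ 3.) -/
import Mathlib


/-- `h m` reverses the binary digits of `m` and reads them as a binary fraction:
`h m = ∑ i, aᵢ 2^{-(i+1)}` where `m = ∑ i, aᵢ 2^i`. -/
noncomputable def h : ℕ → ℝ
  | 0 => 0
  | m + 1 => ((m + 1) % 2 : ℕ) / 2 + h ((m + 1) / 2) / 2
decreasing_by exact Nat.div_lt_self (Nat.succ_pos m) one_lt_two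

lemma h_succ (m : ℕ) : h (m + 1) = ((m + 1) % 2 : ℕ) / 2 + h ((m + 1) / 2) / 2 := by
  rw [h]

lemma h_pos_eq (n : ℕ) (hn : 0 < n) : h n = ((n % 2 : ℕ) : ℝ) / 2 + h (n / 2) / 2 := by
  obtain ⟨m, rfl⟩ := Nat.exists_eq_add_of_lt hn
  simpa using h_succ m

lemma h_nonneg (n : ℕ) : 0 ≤ h n := by
  induction n using Nat.strong_induction_on with
  | _ n ih =>
    match n with
    | 0 => simp [h]
    | m + 1 =>
      rw [h_succ]
      have := ih ((m + 1) / 2) (Nat.div_lt_self (Nat.succ_pos m) one_lt_two)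
      positivity

lemma h_lt_one (n : ℕ) : h n < 1 := by
  induction n using Nat.strong_induction_on with
  | _ n ih =>
    match n with
    | 0 => simp [h]
    | m + 1 =>
      rw [h_succ]
      have h1 := ih ((m + 1) / 2) (Nat.div_lt_self (Nat.succ_pos m) one_lt_two)
      have h2 : (((m + 1) % 2 : ℕ) : ℝ) ≤ 1 := by
        exact_mod_cast Nat.le_of_lt_succ (Nat.mod_lt _ two_pos)
      linarith

lemma key (k : ℕ) : h (3 * k + 2) < 1 / 2 + h k / 2 := by
  induction k using Nat.strong_induction_on with
  | _ k ih =>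
    rcases Nat.even_or_odd k with ⟨j, rfl⟩ | ⟨j, rfl⟩
    · -- k = 2j, 3k+2 = 6j+2, h(6j+2) = h(3j+1)/2
      have e1 : h (3 * (j + j) + 2) = h (3 * j + 1) / 2 := by
        rw [h_pos_eq (3 * (j + j) + 2) (by omega)]
        have : (3 * (j + j) + 2) % 2 = 0 := by omega
        have h2 : (3 * (j + j) + 2) / 2 = 3 * j + 1 := by omega
        rw [this, h2]; simp
      rw [e1]
      have := h_lt_one (3 * j + 1)
      have := h_nonneg (j + j)
      linarith
    · -- k = 2j+1, 3k+2 = 6j+5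
      have e1 : h (3 * (2 * j + 1) + 2) = 1 / 2 + h (3 * j + 2) / 2 := by
        rw [h_pos_eq (3 * (2 * j + 1) + 2) (by omega)]
        have h1 : (3 * (2 * j + 1) + 2) % 2 = 1 := by omega
        have h2 : (3 * (2 * j + 1) + 2) / 2 = 3 * j + 2 := by omega
        rw [h1, h2]; norm_num
      have e2 : h (2 * j + 1) = 1 / 2 + h j / 2 := by
        rw [h_pos_eq (2 * j + 1) (by omega)]
        have h1 : (2 * j + 1) % 2 = 1 := by omega
        have h2 : (2 * j + 1) / 2 = j := by omega
        rw [h1, h2]; norm_num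
      rw [e1, e2]
      have := ih j (by omega)
      linarith

theorem h_decreasing_on_odd (m : ℕ) (hm : Odd m) (hm3 : 3 ≤ m) :
    h ((3 * m + 1) / 2) < h m := by
  obtain ⟨k, rfl⟩ := hm
  have e0 : (3 * (2 * k + 1) + 1) / 2 = 3 * k + 2 := by omega
  have e2 : h (2 * k + 1) = 1 / 2 + h k / 2 := by
    rw [h_pos_eq (2 * k + 1) (by omega)]
    have h1 : (2 * k + 1) % 2 = 1 := by omega
    have h2 : (2 * k + 1) / 2 = k := by omega
    rw [h1, h2]; norm_num
  rw [e0, e2]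
  exact key k
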